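/- Let k ≥ 1 and consider the 2k points ξ_i = e_i and ξ_{k+i} = −e_i (i = 1,…,k) in ℝ^k under the 1-norm. Then ∑_{i=1}^{2k} ‖ξ_i − 0‖₁ = 2k, while for every j ∈ {1,…,2k}, ∑_{i=1}^{2k} ‖ξ_i − ξ_j‖₁ = 2(2k − 1). Consequently min_j (1/(2k))∑_i ‖ξ_i − ξ_j‖₁ = 2(1 − 1/(2k)) · (1/(2k))∑_i ‖ξ_i − 0‖₁ / 1. -/

import Mathlib

/-! Every `ξ i` is a signed standard basis vector `Pi.single (axis i) (sign i)`, of `ℓ¹`-norm 1.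
Two distinct ones either lie on different axes (distance `1 + 1`) or are opposite on the same
axis (distance `|1 - (-1)|`), so each `ξ j` is at distance 2 from each of the other `2k - 1`
points, and the infimum is over a constant. -/

open Finset

section PiSingle

variable {ι : Type*} [Fintype ι] [DecidableEq ι]

lemma sum_abs_pi_single (a : ι) (x : ℝ) : ∑ t, |Pi.single a x t| = |x| := by
  simp only [Pi.apply_single (fun _ ↦ abs) (fun _ ↦ abs_zero), Finset.sum_pi_single', mem_univ,
    if_true]

lemma sum_abs_pi_single_sub_pi_single_of_ne {a b : ι} (hab : a ≠ b) (x y : ℝ) :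
    ∑ t, |Pi.single a x t - Pi.single b y t| = |x| + |y| := by
  have hsplit : ∀ t, |Pi.single a x t - Pi.single b y t| =
      |(Pi.single a x : ι → ℝ) t| + |(Pi.single b y : ι → ℝ) t| := by
    intro t
    by_cases hta : t = a
    · subst hta; simp [hab]
    · by_cases htb : t = b
      · subst htb; simp [hta]
      · simp [hta, htb]
  rw [Finset.sum_congr rfl fun t _ ↦ hsplit t, Finset.sum_add_distrib, sum_abs_pi_single,
    sum_abs_pi_single]

lemma sum_abs_pi_single_sub_pi_single_self (a : ι) (x y : ℝ) :
    ∑ t, |Pi.single a x t - Pi.single a y t| = |x - y| := by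
  simp only [← Pi.sub_apply, ← Pi.single_sub, sum_abs_pi_single]

end PiSingle

lemma sum_apply_of_pairwise_eq {ι : Type*} [Fintype ι] [DecidableEq ι] (d : ι → ι → ℝ) (c : ℝ)
    (hself : ∀ j, d j j = 0) (hne : ∀ i j, i ≠ j → d i j = c) (j : ι) :
    ∑ i, d i j = ((Fintype.card ι : ℝ) - 1) * c := by
  rw [← Finset.sum_erase_add _ _ (mem_univ j), hself, add_zero,
    Finset.sum_congr rfl fun i hi ↦ hne i j (Finset.ne_of_mem_erase hi), Finset.sum_const,
    Finset.card_erase_of_mem (mem_univ j), nsmul_eq_mul, Finset.card_univ,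
    Nat.cast_sub (Fintype.card_pos_iff.mpr ⟨j⟩), Nat.cast_one]

namespace CrossPolytope

variable {k : ℕ}

def axis (i : Fin (2 * k)) : Fin k :=
  ⟨if (i : ℕ) < k then i else i - k, by have := i.isLt; split_ifs <;> omega⟩

def sign (i : Fin (2 * k)) : ℝ := if (i : ℕ) < k then 1 else -1

lemma abs_sign (i : Fin (2 * k)) : |sign i| = 1 := by
  unfold sign; split_ifs <;> simp

lemma abs_sign_sub_of_axis_eq {i j : Fin (2 * k)} (hij : i ≠ j) (haxis : axis i = axis j) :
    |sign i - sign j| = 2 := by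
  have hval := congrArg Fin.val haxis
  have hij' : (i : ℕ) ≠ j := Fin.val_ne_of_ne hij
  simp only [axis] at hval
  unfold sign
  split_ifs at hval ⊢ <;> first | omega | norm_num

def vertex (k : ℕ) (i : Fin (2 * k)) : Fin k → ℝ := Pi.single (axis i) (sign i)

lemma vertex_apply (i : Fin (2 * k)) (t : Fin k) :
    vertex k i t = if (i : ℕ) < k then (if (t : ℕ) = (i : ℕ) then 1 else 0)
      else (if (t : ℕ) = (i : ℕ) - k then -1 else 0) := by
  simp only [vertex, axis, sign, Pi.single_apply, Fin.ext_iff]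
  split_ifs <;> simp_all

lemma sum_abs_vertex (i : Fin (2 * k)) : ∑ t, |vertex k i t| = 1 := by
  rw [vertex, sum_abs_pi_single, abs_sign]

lemma sum_abs_vertex_sub_vertex {i j : Fin (2 * k)} (hij : i ≠ j) :
    ∑ t, |vertex k i t - vertex k j t| = 2 := by
  unfold vertex
  by_cases haxis : axis i = axis j
  · rw [haxis, sum_abs_pi_single_sub_pi_single_self, abs_sign_sub_of_axis_eq hij haxis]
  · rw [sum_abs_pi_single_sub_pi_single_of_ne haxis, abs_sign, abs_sign]
    norm_num

end CrossPolytope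

open CrossPolytope in
theorem stmt13_general (k : ℕ) (ξ : Fin (2 * k) → Fin k → ℝ)
    (hξ : ∀ i t, ξ i t =
      if (i : ℕ) < k then (if (t : ℕ) = (i : ℕ) then 1 else 0)
      else (if (t : ℕ) = (i : ℕ) - k then -1 else 0)) :
    (∑ i, ∑ t, |ξ i t| = 2 * (k : ℝ))
    ∧ (∀ j, ∑ i, ∑ t, |ξ i t - ξ j t| = 2 * (2 * (k : ℝ) - 1))
    ∧ ((⨅ j : Fin (2 * k), (1 / (2 * (k : ℝ))) * ∑ i, ∑ t, |ξ i t - ξ j t|)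
        = 2 * (1 - 1 / (2 * (k : ℝ))) * ((1 / (2 * (k : ℝ))) * ∑ i, ∑ t, |ξ i t|)) := by
  obtain rfl : ξ = vertex k := funext₂ fun i t ↦ (hξ i t).trans (vertex_apply i t).symm
  have hnorm : ∑ i, ∑ t, |vertex k i t| = 2 * (k : ℝ) := by simp [sum_abs_vertex]
  have hdist (j : Fin (2 * k)) :
      ∑ i, ∑ t, |vertex k i t - vertex k j t| = 2 * (2 * (k : ℝ) - 1) := by
    rw [sum_apply_of_pairwise_eq _ 2 (fun _ ↦ by simp) (fun _ _ ↦ sum_abs_vertex_sub_vertex)]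
    push_cast [Fintype.card_fin]
    ring
  refine ⟨hnorm, hdist, ?_⟩
  simp only [hnorm, hdist]
  rcases Nat.eq_zero_or_pos k with rfl | hk
  · simp -- the infimum over the empty index type is `0`
  · have : Nonempty (Fin (2 * k)) := ⟨⟨0, by omega⟩⟩
    rw [ciInf_const]
    field_simp

theorem stmt13 (k : ℕ) (hk : 1 ≤ k) (ξ : Fin (2 * k) → Fin k → ℝ)
    (hξ : ∀ i t, ξ i t =
      if (i : ℕ) < k then (if (t : ℕ) = (i : ℕ) then 1 else 0)
      else (if (t : ℕ) = (i : ℕ) - k then -1 else 0)) :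
    (∑ i, ∑ t, |ξ i t| = 2 * (k : ℝ))
    ∧ (∀ j, ∑ i, ∑ t, |ξ i t - ξ j t| = 2 * (2 * (k : ℝ) - 1))
    ∧ ((⨅ j : Fin (2 * k), (1 / (2 * (k : ℝ))) * ∑ i, ∑ t, |ξ i t - ξ j t|)
        = 2 * (1 - 1 / (2 * (k : ℝ))) * ((1 / (2 * (k : ℝ))) * ∑ i, ∑ t, |ξ i t|)) :=
  stmt13_general k ξ hξ
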